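/- arXiv:2106.13836 — 5 statements merged into one kernel-verified Lean document; each statement's English description precedes it below -/
import Mathlib

section
/- Profit nonnegativity (Theorem 1): If the allocations satisfy g_i ≥ 0, d_j ≥ 0, f_l ≥ 0, ξ_m ≥ 0, and the prices and multipliers (π, λ̄) satisfy dual feasibility and complementary slackness, then every stakeholder profit is nonnegative: φ^g_i ≥ 0 for all i∈𝒢, φ^d_j ≥ 0 for all j∈𝒟, φ^f_l ≥ 0 for all l∈ℒ, and φ^ξ_m ≥ 0 for all m∈ℳ. -/
open Finset

/-- A multi-product supply-chain market: suppliers `G`, consumers `D`,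
transport providers `L`, technology providers `M`, space-time nodes `S`,
products `P`. -/
structure Market (G D L M S P : Type*) where
  /-- node of supplier `i` -/
  sG : G → S
  /-- product of supplier `i` -/
  pG : G → P
  /-- supplier bid `α^g_i` -/
  aG : G → ℝ
  /-- supplier capacity `ḡ_i` -/
  capG : G → ℝ
  /-- node of consumer `j` -/
  sD : D → S
  /-- product of consumer `j` -/
  pD : D → P
  /-- consumer bid `α^d_j` -/
  aD : D → ℝ
  /-- consumer capacity `d̄_j` -/
  capD : D → ℝ
  /-- base node `s_b(l)` of transport provider `l` -/
  sb : L → S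
  /-- receiving node `s_r(l)` of transport provider `l` -/
  sr : L → S
  /-- product of transport provider `l` -/
  pL : L → P
  /-- transport bid `α^f_l` -/
  aL : L → ℝ
  /-- transport capacity `f̄_l` -/
  capL : L → ℝ
  /-- node of technology `m` -/
  sM : M → S
  /-- consumed products `𝒫^con_m` -/
  Pcon : M → Finset P
  /-- generated products `𝒫^gen_m` -/
  Pgen : M → Finset P
  /-- consumed and generated product sets are disjoint -/
  disjointConGen : ∀ m, Disjoint (Pcon m) (Pgen m)
  /-- yields `γ_{m,p}` -/
  gam : M → P → ℝ
  /-- technology bid `α^ξ_m` -/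
  aM : M → ℝ
  /-- technology capacity `ξ̄_m` -/
  capM : M → ℝ

namespace Market

variable {G D L M S P : Type*} [Fintype G] [Fintype D] [Fintype L] [Fintype M]
  [Fintype S] [Fintype P] [DecidableEq S] [DecidableEq P]

/-- supplier price `π_i := π(s(i),p(i))` -/
def priceG (mk : Market G D L M S P) (pr : S → P → ℝ) (i : G) : ℝ :=
  pr (mk.sG i) (mk.pG i)

/-- consumer price `π_j := π(s(j),p(j))` -/
def priceD (mk : Market G D L M S P) (pr : S → P → ℝ) (j : D) : ℝ :=
  pr (mk.sD j) (mk.pD j)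

/-- transport price `π_l := π(s_r(l),p(l)) − π(s_b(l),p(l))` -/
def priceL (mk : Market G D L M S P) (pr : S → P → ℝ) (l : L) : ℝ :=
  pr (mk.sr l) (mk.pL l) - pr (mk.sb l) (mk.pL l)

/-- technology price `π_m` -/
def priceM (mk : Market G D L M S P) (pr : S → P → ℝ) (m : M) : ℝ :=
  (∑ p ∈ mk.Pgen m, mk.gam m p * pr (mk.sM m) p)
    - ∑ p ∈ mk.Pcon m, mk.gam m p * pr (mk.sM m) p

/-- the market clearing constraints -/
def Clearing (mk : Market G D L M S P) (g : G → ℝ) (d : D → ℝ) (f : L → ℝ)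
    (ξ : M → ℝ) : Prop :=
  ∀ (s : S) (p : P),
    ((∑ i : G, if mk.sG i = s ∧ mk.pG i = p then g i else 0)
        + (∑ l : L, if mk.sr l = s ∧ mk.pL l = p then f l else 0)
        + ∑ m : M, if mk.sM m = s ∧ p ∈ mk.Pgen m then mk.gam m p * ξ m else 0)
      = ((∑ j : D, if mk.sD j = s ∧ mk.pD j = p then d j else 0)
        + (∑ l : L, if mk.sb l = s ∧ mk.pL l = p then f l else 0)
        + ∑ m : M, if mk.sM m = s ∧ p ∈ mk.Pcon m then mk.gam m p * ξ m else 0)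

/-- primal feasibility: capacity bounds and clearing constraints -/
def Feasible (mk : Market G D L M S P) (g : G → ℝ) (d : D → ℝ) (f : L → ℝ)
    (ξ : M → ℝ) : Prop :=
  (∀ i, 0 ≤ g i ∧ g i ≤ mk.capG i) ∧ (∀ j, 0 ≤ d j ∧ d j ≤ mk.capD j) ∧
    (∀ l, 0 ≤ f l ∧ f l ≤ mk.capL l) ∧ (∀ m, 0 ≤ ξ m ∧ ξ m ≤ mk.capM m) ∧
    mk.Clearing g d f ξ

/-- the total surplus -/
def surplus (mk : Market G D L M S P) (g : G → ℝ) (d : D → ℝ) (f : L → ℝ)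
    (ξ : M → ℝ) : ℝ :=
  (∑ j : D, mk.aD j * d j) - (∑ i : G, mk.aG i * g i)
    - (∑ l : L, mk.aL l * f l) - ∑ m : M, mk.aM m * ξ m

/-- dual feasibility of prices and multipliers -/
def DualFeasible (mk : Market G D L M S P) (pr : S → P → ℝ)
    (lamG : G → ℝ) (lamD : D → ℝ) (lamL : L → ℝ) (lamM : M → ℝ) : Prop :=
  (∀ i, 0 ≤ lamG i ∧ mk.priceG pr i - lamG i ≤ mk.aG i) ∧
    (∀ j, 0 ≤ lamD j ∧ mk.aD j ≤ mk.priceD pr j + lamD j) ∧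
    (∀ l, 0 ≤ lamL l ∧ mk.priceL pr l - lamL l ≤ mk.aL l) ∧
    (∀ m, 0 ≤ lamM m ∧ mk.priceM pr m - lamM m ≤ mk.aM m)

/-- complementary slackness -/
def CompSlack (mk : Market G D L M S P) (g : G → ℝ) (d : D → ℝ) (f : L → ℝ)
    (ξ : M → ℝ) (pr : S → P → ℝ)
    (lamG : G → ℝ) (lamD : D → ℝ) (lamL : L → ℝ) (lamM : M → ℝ) : Prop :=
  (∀ i, (mk.priceG pr i - lamG i - mk.aG i) * g i = 0
      ∧ lamG i * (mk.capG i - g i) = 0) ∧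
    (∀ j, (mk.aD j - mk.priceD pr j - lamD j) * d j = 0
      ∧ lamD j * (mk.capD j - d j) = 0) ∧
    (∀ l, (mk.priceL pr l - lamL l - mk.aL l) * f l = 0
      ∧ lamL l * (mk.capL l - f l) = 0) ∧
    (∀ m, (mk.priceM pr m - lamM m - mk.aM m) * ξ m = 0
      ∧ lamM m * (mk.capM m - ξ m) = 0)

/-- supplier profit `φ^g_i` -/
def profitG (mk : Market G D L M S P) (pr : S → P → ℝ) (g : G → ℝ) (i : G) : ℝ :=
  (mk.priceG pr i - mk.aG i) * g i

/-- consumer profit `φ^d_j` -/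
def profitD (mk : Market G D L M S P) (pr : S → P → ℝ) (d : D → ℝ) (j : D) : ℝ :=
  (mk.aD j - mk.priceD pr j) * d j

/-- transport profit `φ^f_l` -/
def profitL (mk : Market G D L M S P) (pr : S → P → ℝ) (f : L → ℝ) (l : L) : ℝ :=
  (mk.priceL pr l - mk.aL l) * f l

/-- technology profit `φ^ξ_m` -/
def profitM (mk : Market G D L M S P) (pr : S → P → ℝ) (ξ : M → ℝ) (m : M) : ℝ :=
  (mk.priceM pr m - mk.aM m) * ξ m

end Market

/-- Complementary slackness `(a - b - c) * x = 0` turns the margin `(a - c) * x` into `b * x`. -/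
theorem sub_mul_nonneg_of_sub_sub_mul_eq_zero {R : Type*} [CommRing R] [PartialOrder R]
    [IsOrderedRing R] {a b c x : R} (hb : 0 ≤ b) (hx : 0 ≤ x) (h : (a - b - c) * x = 0) :
    0 ≤ (a - c) * x :=
  calc 0 ≤ b * x := mul_nonneg hb hx
    _ = (a - b - c) * x + b * x := by rw [h, zero_add]
    _ = (a - c) * x := by ring

theorem profit_nonneg_general {G D L M S P : Type*}
    (mk : Market G D L M S P)
    (g : G → ℝ) (d : D → ℝ) (f : L → ℝ) (ξ : M → ℝ) (pr : S → P → ℝ)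
    (lamG : G → ℝ) (lamD : D → ℝ) (lamL : L → ℝ) (lamM : M → ℝ)
    (hg : ∀ i, 0 ≤ g i) (hd : ∀ j, 0 ≤ d j) (hf : ∀ l, 0 ≤ f l) (hξ : ∀ m, 0 ≤ ξ m)
    (hdual : mk.DualFeasible pr lamG lamD lamL lamM)
    (hcs : mk.CompSlack g d f ξ pr lamG lamD lamL lamM) :
    (∀ i, 0 ≤ mk.profitG pr g i) ∧ (∀ j, 0 ≤ mk.profitD pr d j) ∧
      (∀ l, 0 ≤ mk.profitL pr f l) ∧ (∀ m, 0 ≤ mk.profitM pr ξ m) := by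
  obtain ⟨dualG, dualD, dualL, dualM⟩ := hdual
  obtain ⟨slackG, slackD, slackL, slackM⟩ := hcs
  exact ⟨fun i => sub_mul_nonneg_of_sub_sub_mul_eq_zero (dualG i).1 (hg i) (slackG i).1,
    fun j => sub_mul_nonneg_of_sub_sub_mul_eq_zero (dualD j).1 (hd j)
      (by rw [sub_right_comm]; exact (slackD j).1),
    fun l => sub_mul_nonneg_of_sub_sub_mul_eq_zero (dualL l).1 (hf l) (slackL l).1,
    fun m => sub_mul_nonneg_of_sub_sub_mul_eq_zero (dualM m).1 (hξ m) (slackM m).1⟩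

/-- Profit nonnegativity (Theorem 1). -/
theorem profit_nonneg {G D L M S P : Type*} [Fintype G] [Fintype D] [Fintype L] [Fintype M]
    [Fintype S] [Fintype P] [DecidableEq S] [DecidableEq P]
    (mk : Market G D L M S P)
    (g : G → ℝ) (d : D → ℝ) (f : L → ℝ) (ξ : M → ℝ) (pr : S → P → ℝ)
    (lamG : G → ℝ) (lamD : D → ℝ) (lamL : L → ℝ) (lamM : M → ℝ)
    (hg : ∀ i, 0 ≤ g i) (hd : ∀ j, 0 ≤ d j) (hf : ∀ l, 0 ≤ f l) (hξ : ∀ m, 0 ≤ ξ m)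
    (hdual : mk.DualFeasible pr lamG lamD lamL lamM)
    (hcs : mk.CompSlack g d f ξ pr lamG lamD lamL lamM) :
    (∀ i, 0 ≤ mk.profitG pr g i) ∧ (∀ j, 0 ≤ mk.profitD pr d j) ∧
      (∀ l, 0 ≤ mk.profitL pr f l) ∧ (∀ m, 0 ≤ mk.profitM pr ξ m) :=
  profit_nonneg_general mk g d f ξ pr lamG lamD lamL lamM hg hd hf hξ hdual hcs
end

section
/- Competitive equilibrium (Theorem 3): Suppose the allocations (g,d,f,ξ) satisfy the capacity bounds 0 ≤ g_i ≤ ḡ_i, 0 ≤ d_j ≤ d̄_j, 0 ≤ f_l ≤ f̄_l, 0 ≤ ξ_m ≤ ξ̄_m, and (π, λ̄) satisfy dual feasibility and complementary slackness. Then each stakeholder's allocation maximizes its individual profit given the prices: for every supplier i∈𝒢 and every g' with 0 ≤ g' ≤ ḡ_i one has (π_i − α^g_i)g' ≤ φ^g_i; for every consumer j∈𝒟 and every d' with 0 ≤ d' ≤ d̄_j one has (α^d_j − π_j)d' ≤ φ^d_j; for every transport provider l∈ℒ and every f' with 0 ≤ f' ≤ f̄_l one has (π_l − α^f_l)f' ≤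 φ^f_l; and for every technology provider m∈ℳ and every ξ' with 0 ≤ ξ' ≤ ξ̄_m one has (π_m − α^ξ_m)ξ' ≤ φ^ξ_m. -/
open Finset

/-!
Each stakeholder solves the one-dimensional linear program `max c * x` over `0 ≤ x ≤ x̄`, and its
multiplier `λ` certifies optimality: `c * x' ≤ λ * x' ≤ λ * x̄ = λ * x = c * x`, using dual
feasibility for the first two steps and complementary slackness for the last two.
-/

theorem mul_le_of_complementary_slackness {c lam x cap x' : ℝ} (hlam : 0 ≤ lam) (hdual : c ≤ lam)
    (hcs : (c - lam) * x = 0) (hcs_cap : lam * (cap - x) = 0) (hx'₀ : 0 ≤ x') (hx'cap : x' ≤ cap) :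
    c * x' ≤ c * x :=
  calc c * x' = (c - lam) * x' + lam * x' := by ring
    _ ≤ 0 + lam * cap :=
      add_le_add (mul_nonpos_of_nonpos_of_nonneg (sub_nonpos.mpr hdual) hx'₀)
        (mul_le_mul_of_nonneg_left hx'cap hlam)
    _ = c * x := by linear_combination hcs_cap - hcs

theorem competitive_equilibrium_general {G D L M S P : Type*}
    (mk : Market G D L M S P)
    (g : G → ℝ) (d : D → ℝ) (f : L → ℝ) (ξ : M → ℝ) (pr : S → P → ℝ)
    (lamG : G → ℝ) (lamD : D → ℝ) (lamL : L → ℝ) (lamM : M → ℝ)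
    (hdual : mk.DualFeasible pr lamG lamD lamL lamM)
    (hcs : mk.CompSlack g d f ξ pr lamG lamD lamL lamM) :
    (∀ i, ∀ g' : ℝ, 0 ≤ g' → g' ≤ mk.capG i →
        (mk.priceG pr i - mk.aG i) * g' ≤ mk.profitG pr g i) ∧
      (∀ j, ∀ d' : ℝ, 0 ≤ d' → d' ≤ mk.capD j →
        (mk.aD j - mk.priceD pr j) * d' ≤ mk.profitD pr d j) ∧
      (∀ l, ∀ f' : ℝ, 0 ≤ f' → f' ≤ mk.capL l →
        (mk.priceL pr l - mk.aL l) * f' ≤ mk.profitL pr f l) ∧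
      (∀ m, ∀ ξ' : ℝ, 0 ≤ ξ' → ξ' ≤ mk.capM m →
        (mk.priceM pr m - mk.aM m) * ξ' ≤ mk.profitM pr ξ m) := by
  obtain ⟨hdG, hdD, hdL, hdM⟩ := hdual
  obtain ⟨hcG, hcD, hcL, hcM⟩ := hcs
  refine ⟨fun i g' h₀ hcap => ?_, fun j d' h₀ hcap => ?_, fun l f' h₀ hcap => ?_,
    fun m ξ' h₀ hcap => ?_⟩
  · exact mul_le_of_complementary_slackness (hdG i).1 (sub_le_comm.mp (hdG i).2)
      (by rw [sub_right_comm]; exact (hcG i).1) (hcG i).2 h₀ hcap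
  · exact mul_le_of_complementary_slackness (hdD j).1 (sub_le_iff_le_add'.mpr (hdD j).2)
      (hcD j).1 (hcD j).2 h₀ hcap
  · exact mul_le_of_complementary_slackness (hdL l).1 (sub_le_comm.mp (hdL l).2)
      (by rw [sub_right_comm]; exact (hcL l).1) (hcL l).2 h₀ hcap
  · exact mul_le_of_complementary_slackness (hdM m).1 (sub_le_comm.mp (hdM m).2)
      (by rw [sub_right_comm]; exact (hcM m).1) (hcM m).2 h₀ hcap

/-- Competitive equilibrium (Theorem 3): each stakeholder's allocation maximizes
its individual profit given the prices. -/
theorem competitive_equilibrium {G D L M S P : Type*} [Fintype G] [Fintype D] [Fintype L] [Fintype M]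
    [Fintype S] [Fintype P] [DecidableEq S] [DecidableEq P]
    (mk : Market G D L M S P)
    (g : G → ℝ) (d : D → ℝ) (f : L → ℝ) (ξ : M → ℝ) (pr : S → P → ℝ)
    (lamG : G → ℝ) (lamD : D → ℝ) (lamL : L → ℝ) (lamM : M → ℝ)
    (hg : ∀ i, 0 ≤ g i ∧ g i ≤ mk.capG i)
    (hd : ∀ j, 0 ≤ d j ∧ d j ≤ mk.capD j)
    (hf : ∀ l, 0 ≤ f l ∧ f l ≤ mk.capL l)
    (hξ : ∀ m, 0 ≤ ξ m ∧ ξ m ≤ mk.capM m)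
    (hdual : mk.DualFeasible pr lamG lamD lamL lamM)
    (hcs : mk.CompSlack g d f ξ pr lamG lamD lamL lamM) :
    (∀ i, ∀ g' : ℝ, 0 ≤ g' → g' ≤ mk.capG i →
        (mk.priceG pr i - mk.aG i) * g' ≤ mk.profitG pr g i) ∧
      (∀ j, ∀ d' : ℝ, 0 ≤ d' → d' ≤ mk.capD j →
        (mk.aD j - mk.priceD pr j) * d' ≤ mk.profitD pr d j) ∧
      (∀ l, ∀ f' : ℝ, 0 ≤ f' → f' ≤ mk.capL l →
        (mk.priceL pr l - mk.aL l) * f' ≤ mk.profitL pr f l) ∧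
      (∀ m, ∀ ξ' : ℝ, 0 ≤ ξ' → ξ' ≤ mk.capM m →
        (mk.priceM pr m - mk.aM m) * ξ' ≤ mk.profitM pr ξ m) :=
  competitive_equilibrium_general mk g d f ξ pr lamG lamD lamL lamM hdual hcs
end

section
/- Price lower bounds for cleared players (Theorem 5): Suppose the allocations satisfy g_i ≥ 0, d_j ≥ 0, f_l ≥ 0, ξ_m ≥ 0, and (π, λ̄) satisfy dual feasibility and complementary slackness. Then the clearing prices of cleared stakeholders are bounded by their bids: if g_i > 0 then π_i ≥ α^g_i; if d_j > 0 then π_j ≤ α^d_j; if f_l > 0 then π_l ≥ α^f_l; and if ξ_m > 0 then π_m ≥ α^ξ_m. -/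
open Finset

theorem le_of_sub_sub_mul_eq_zero {R : Type*} [Ring R] [LinearOrder R] [IsStrictOrderedRing R]
    {a b c x : R} (hc : 0 ≤ c) (hx : 0 < x) (h : (a - c - b) * x = 0) : b ≤ a := by
  have hslack : a - c - b = 0 := (mul_eq_zero.mp h).resolve_right hx.ne'
  calc b = a - c := (sub_eq_zero.mp hslack).symm
    _ ≤ a := sub_le_self a hc

theorem cleared_price_bounds_general {G D L M S P : Type*}
    (mk : Market G D L M S P)
    (g : G → ℝ) (d : D → ℝ) (f : L → ℝ) (ξ : M → ℝ) (pr : S → P → ℝ)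
    (lamG : G → ℝ) (lamD : D → ℝ) (lamL : L → ℝ) (lamM : M → ℝ)
    (hdual : mk.DualFeasible pr lamG lamD lamL lamM)
    (hcs : mk.CompSlack g d f ξ pr lamG lamD lamL lamM) :
    (∀ i, 0 < g i → mk.aG i ≤ mk.priceG pr i) ∧
      (∀ j, 0 < d j → mk.priceD pr j ≤ mk.aD j) ∧
      (∀ l, 0 < f l → mk.aL l ≤ mk.priceL pr l) ∧
      (∀ m, 0 < ξ m → mk.aM m ≤ mk.priceM pr m) := by
  obtain ⟨hG, hD, hL, hM⟩ := hdual
  obtain ⟨cG, cD, cL, cM⟩ := hcs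
  refine ⟨fun i hi ↦ le_of_sub_sub_mul_eq_zero (hG i).1 hi (cG i).1,
    fun j hj ↦ le_of_sub_sub_mul_eq_zero (hD j).1 hj ?_,
    fun l hl ↦ le_of_sub_sub_mul_eq_zero (hL l).1 hl (cL l).1,
    fun m hm ↦ le_of_sub_sub_mul_eq_zero (hM m).1 hm (cM m).1⟩
  rw [sub_right_comm]
  exact (cD j).1

/-- Price lower bounds for cleared players (Theorem 5). -/
theorem cleared_price_bounds {G D L M S P : Type*} [Fintype G] [Fintype D] [Fintype L] [Fintype M]
    [Fintype S] [Fintype P] [DecidableEq S] [DecidableEq P]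
    (mk : Market G D L M S P)
    (g : G → ℝ) (d : D → ℝ) (f : L → ℝ) (ξ : M → ℝ) (pr : S → P → ℝ)
    (lamG : G → ℝ) (lamD : D → ℝ) (lamL : L → ℝ) (lamM : M → ℝ)
    (hg : ∀ i, 0 ≤ g i) (hd : ∀ j, 0 ≤ d j) (hf : ∀ l, 0 ≤ f l) (hξ : ∀ m, 0 ≤ ξ m)
    (hdual : mk.DualFeasible pr lamG lamD lamL lamM)
    (hcs : mk.CompSlack g d f ξ pr lamG lamD lamL lamM) :
    (∀ i, 0 < g i → mk.aG i ≤ mk.priceG pr i) ∧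
      (∀ j, 0 < d j → mk.priceD pr j ≤ mk.aD j) ∧
      (∀ l, 0 < f l → mk.aL l ≤ mk.priceL pr l) ∧
      (∀ m, 0 < ξ m → mk.aM m ≤ mk.priceM pr m) :=
  cleared_price_bounds_general mk g d f ξ pr lamG lamD lamL lamM hdual hcs
end

section
/- Two-sided price bounds (Theorems 5 and 6 combined): Suppose the allocations satisfy g_i ≥ 0, d_j ≥ 0, f_l ≥ 0, ξ_m ≥ 0, and (π, λ̄) satisfy dual feasibility and complementary slackness. Then for every cleared stakeholder the clearing price lies between its bid and its bid adjusted by its marginal profit: if g_i > 0 then α^g_i ≤ π_i ≤ α^g_i + λ̄_i; if d_j > 0 then α^d_j − λ̄_j ≤ π_j ≤ α^d_j; if f_l > 0 then α^f_l ≤ π_l ≤ α^f_l + λ̄_l; and if ξ_m > 0 then α^ξ_m ≤ π_m ≤ α^ξ_m + λ̄_m. -/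
open Finset

theorem bid_le_price_le_bid_add {price bid lam q : ℝ} (hlam : 0 ≤ lam) (hq : 0 < q)
    (hcs : (price - lam - bid) * q = 0) : bid ≤ price ∧ price ≤ bid + lam := by
  have hprice : price = bid + lam := by
    linarith [(mul_eq_zero.mp hcs).resolve_right hq.ne']
  constructor <;> linarith

/-- A buyer is a seller of the negated price at the negated bid. -/
theorem bid_sub_le_price_le_bid {price bid lam q : ℝ} (hlam : 0 ≤ lam) (hq : 0 < q)
    (hcs : (bid - price - lam) * q = 0) : bid - lam ≤ price ∧ price ≤ bid := by
  obtain ⟨hlow, hhigh⟩ :=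
    bid_le_price_le_bid_add (price := -price) (bid := -bid) hlam hq (by rw [← hcs]; ring)
  constructor <;> linarith

theorem two_sided_price_bounds_general {G D L M S P : Type*}
    (mk : Market G D L M S P)
    (g : G → ℝ) (d : D → ℝ) (f : L → ℝ) (ξ : M → ℝ) (pr : S → P → ℝ)
    (lamG : G → ℝ) (lamD : D → ℝ) (lamL : L → ℝ) (lamM : M → ℝ)
    (hdual : mk.DualFeasible pr lamG lamD lamL lamM)
    (hcs : mk.CompSlack g d f ξ pr lamG lamD lamL lamM) :
    (∀ i, 0 < g i → mk.aG i ≤ mk.priceG pr i ∧ mk.priceG pr i ≤ mk.aG i + lamG i) ∧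
      (∀ j, 0 < d j → mk.aD j - lamD j ≤ mk.priceD pr j ∧ mk.priceD pr j ≤ mk.aD j) ∧
      (∀ l, 0 < f l → mk.aL l ≤ mk.priceL pr l ∧ mk.priceL pr l ≤ mk.aL l + lamL l) ∧
      (∀ m, 0 < ξ m → mk.aM m ≤ mk.priceM pr m ∧ mk.priceM pr m ≤ mk.aM m + lamM m) := by
  obtain ⟨hdualG, hdualD, hdualL, hdualM⟩ := hdual
  obtain ⟨hcsG, hcsD, hcsL, hcsM⟩ := hcs
  exact ⟨fun i hi => bid_le_price_le_bid_add (hdualG i).1 hi (hcsG i).1,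
    fun j hj => bid_sub_le_price_le_bid (hdualD j).1 hj (hcsD j).1,
    fun l hl => bid_le_price_le_bid_add (hdualL l).1 hl (hcsL l).1,
    fun m hm => bid_le_price_le_bid_add (hdualM m).1 hm (hcsM m).1⟩

/-- Two-sided price bounds (Theorems 5 and 6 combined). -/
theorem two_sided_price_bounds {G D L M S P : Type*} [Fintype G] [Fintype D] [Fintype L] [Fintype M]
    [Fintype S] [Fintype P] [DecidableEq S] [DecidableEq P]
    (mk : Market G D L M S P)
    (g : G → ℝ) (d : D → ℝ) (f : L → ℝ) (ξ : M → ℝ) (pr : S → P → ℝ)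
    (lamG : G → ℝ) (lamD : D → ℝ) (lamL : L → ℝ) (lamM : M → ℝ)
    (hg : ∀ i, 0 ≤ g i) (hd : ∀ j, 0 ≤ d j) (hf : ∀ l, 0 ≤ f l) (hξ : ∀ m, 0 ≤ ξ m)
    (hdual : mk.DualFeasible pr lamG lamD lamL lamM)
    (hcs : mk.CompSlack g d f ξ pr lamG lamD lamL lamM) :
    (∀ i, 0 < g i → mk.aG i ≤ mk.priceG pr i ∧ mk.priceG pr i ≤ mk.aG i + lamG i) ∧
      (∀ j, 0 < d j → mk.aD j - lamD j ≤ mk.priceD pr j ∧ mk.priceD pr j ≤ mk.aD j) ∧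
      (∀ l, 0 < f l → mk.aL l ≤ mk.priceL pr l ∧ mk.priceL pr l ≤ mk.aL l + lamL l) ∧
      (∀ m, 0 < ξ m → mk.aM m ≤ mk.priceM pr m ∧ mk.priceM pr m ≤ mk.aM m + lamM m) :=
  two_sided_price_bounds_general mk g d f ξ pr lamG lamD lamL lamM hdual hcs
end

section
/- Profit bounds (Theorem 7): Suppose the allocations satisfy the capacity bounds 0 ≤ g_i ≤ ḡ_i, 0 ≤ d_j ≤ d̄_j, 0 ≤ f_l ≤ f̄_l, 0 ≤ ξ_m ≤ ξ̄_m, and (π, λ̄) satisfy dual feasibility and complementary slackness. Then a stakeholder can be allocated a strictly positive profit only if it is allocated its entire capacity, and its profit is bounded by its marginal profit times its capacity: if φ^g_i > 0 then g_i = ḡ_i, and in all cases φ^g_i ≤ λ̄_i ḡ_i; analogously, if φ^d_j > 0 then d_j = d̄_j and φ^d_j ≤ λ̄_j d̄_j; if φ^f_l > 0 then f_l = f̄_l and φ^f_l ≤ λ̄_l f̄_l; if φ^ξ_m > 0 then ξ_m = ξ̄_m and φ^ξ_m ≤ λ̄_m ξ̄_m. -/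
open Finset

/-!
Complementary slackness alone pins the profit down exactly: the first condition turns the
profit `(π - α) x` into `λ̄ x`, and the second turns `λ̄ x` into `λ̄ x̄`. A positive profit
then forces `λ̄ ≠ 0`, so the second condition gives `x = x̄`.
-/

section ComplementarySlackness

variable {c lam x cap : ℝ}

theorem mul_eq_mul_of_complementary (hx : (c - lam) * x = 0) (hcap : lam * (cap - x) = 0) :
    c * x = lam * cap := by
  linear_combination hx - hcap

theorem eq_of_mul_pos_of_complementary (hx : (c - lam) * x = 0) (hcap : lam * (cap - x) = 0)
    (hpos : 0 < c * x) : x = cap := by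
  rw [mul_eq_mul_of_complementary hx hcap] at hpos
  have hlam : lam ≠ 0 := left_ne_zero_of_mul hpos.ne'
  exact (sub_eq_zero.1 ((mul_eq_zero.1 hcap).resolve_left hlam)).symm

theorem profit_bounds_of_complementary (hx : (c - lam) * x = 0)
    (hcap : lam * (cap - x) = 0) : (0 < c * x → x = cap) ∧ c * x ≤ lam * cap :=
  ⟨eq_of_mul_pos_of_complementary hx hcap, (mul_eq_mul_of_complementary hx hcap).le⟩

end ComplementarySlackness

theorem profit_bounds_general {G D L M S P : Type*}
    (mk : Market G D L M S P)
    (g : G → ℝ) (d : D → ℝ) (f : L → ℝ) (ξ : M → ℝ) (pr : S → P → ℝ)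
    (lamG : G → ℝ) (lamD : D → ℝ) (lamL : L → ℝ) (lamM : M → ℝ)
    (hcs : mk.CompSlack g d f ξ pr lamG lamD lamL lamM) :
    (∀ i, (0 < mk.profitG pr g i → g i = mk.capG i)
        ∧ mk.profitG pr g i ≤ lamG i * mk.capG i) ∧
      (∀ j, (0 < mk.profitD pr d j → d j = mk.capD j)
        ∧ mk.profitD pr d j ≤ lamD j * mk.capD j) ∧
      (∀ l, (0 < mk.profitL pr f l → f l = mk.capL l)
        ∧ mk.profitL pr f l ≤ lamL l * mk.capL l) ∧
      (∀ m, (0 < mk.profitM pr ξ m → ξ m = mk.capM m)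
        ∧ mk.profitM pr ξ m ≤ lamM m * mk.capM m) := by
  obtain ⟨hcsG, hcsD, hcsL, hcsM⟩ := hcs
  refine ⟨fun i => ?_, fun j => ?_, fun l => ?_, fun m => ?_⟩
  · exact profit_bounds_of_complementary (by rw [sub_right_comm]; exact (hcsG i).1) (hcsG i).2
  · exact profit_bounds_of_complementary (hcsD j).1 (hcsD j).2
  · exact profit_bounds_of_complementary (by rw [sub_right_comm]; exact (hcsL l).1) (hcsL l).2
  · exact profit_bounds_of_complementary (by rw [sub_right_comm]; exact (hcsM m).1) (hcsM m).2

/-- Profit bounds (Theorem 7): positive profit only at full capacity, and profit is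
bounded by marginal profit times capacity. -/
theorem profit_bounds {G D L M S P : Type*} [Fintype G] [Fintype D] [Fintype L] [Fintype M]
    [Fintype S] [Fintype P] [DecidableEq S] [DecidableEq P]
    (mk : Market G D L M S P)
    (g : G → ℝ) (d : D → ℝ) (f : L → ℝ) (ξ : M → ℝ) (pr : S → P → ℝ)
    (lamG : G → ℝ) (lamD : D → ℝ) (lamL : L → ℝ) (lamM : M → ℝ)
    (hg : ∀ i, 0 ≤ g i ∧ g i ≤ mk.capG i)
    (hd : ∀ j, 0 ≤ d j ∧ d j ≤ mk.capD j)
    (hf : ∀ l, 0 ≤ f l ∧ f l ≤ mk.capL l)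
    (hξ : ∀ m, 0 ≤ ξ m ∧ ξ m ≤ mk.capM m)
    (hdual : mk.DualFeasible pr lamG lamD lamL lamM)
    (hcs : mk.CompSlack g d f ξ pr lamG lamD lamL lamM) :
    (∀ i, (0 < mk.profitG pr g i → g i = mk.capG i)
        ∧ mk.profitG pr g i ≤ lamG i * mk.capG i) ∧
      (∀ j, (0 < mk.profitD pr d j → d j = mk.capD j)
        ∧ mk.profitD pr d j ≤ lamD j * mk.capD j) ∧
      (∀ l, (0 < mk.profitL pr f l → f l = mk.capL l)
        ∧ mk.profitL pr f l ≤ lamL l * mk.capL l) ∧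
      (∀ m, (0 < mk.profitM pr ξ m → ξ m = mk.capM m)
        ∧ mk.profitM pr ξ m ≤ lamM m * mk.capM m) :=
  profit_bounds_general mk g d f ξ pr lamG lamD lamL lamM hcs
end
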